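/- arXiv:1709.07996 — 2 statements merged into one kernel-verified Lean document; each statement's English description precedes it below -/
import Mathlib

section
/- For z ∈ Ĩ_n, ℓ(z) = ℓ'(z) if and only if z is a product of commuting simple generators, i.e., z = s_{i₁}s_{i₂}⋯s_{i_l} for distinct indices satisfying i_j ≢ i_k ± 1 (mod n) for all j, k. -/
open Finset

/-- `w` is an element of the affine symmetric group `S̃_n`: a bijection `ℤ → ℤ` with
`w (i + n) = w i + n` for all `i` and `∑_{i=1}^n w i = n (n+1)/2`. -/
def IsAffine (n : ℕ) (w : Equiv.Perm ℤ) : Prop :=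
  (∀ i : ℤ, w (i + n) = w i + n) ∧ ∑ i ∈ Finset.Icc (1 : ℤ) (n : ℤ), (w i - i) = 0

/-- The Coxeter length of `w ∈ S̃_n`: the number of inversions `(i, j)`, `i < j`,
`w i > w j`, counted up to the equivalence `(i,j) ∼ (i+n, j+n)` (representatives with
`i ∈ [n]`). -/
noncomputable def affLen (n : ℕ) (w : Equiv.Perm ℤ) : ℕ :=
  Nat.card {p : ℤ × ℤ // 1 ≤ p.1 ∧ p.1 ≤ (n : ℤ) ∧ p.1 < p.2 ∧ w p.2 < w p.1}

/-- The absolute length of an involution `z ∈ Ĩ_n`: the number of 2-cycles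
`(i, j)` with `i < j = z i`, counted up to the equivalence `(i,j) ∼ (i+n, j+n)`. -/
noncomputable def absLen (n : ℕ) (z : Equiv.Perm ℤ) : ℕ :=
  Nat.card {p : ℤ × ℤ // 1 ≤ p.1 ∧ p.1 ≤ (n : ℤ) ∧ p.1 < p.2 ∧ z p.1 = p.2}

/-- The underlying function of the reflection `t_{i j}`: it sends `i + m n ↦ j + m n` and
`j + m n ↦ i + m n` for all `m`, fixing everything else. -/
def tFun (n : ℕ) (i j x : ℤ) : ℤ :=
  if (n : ℤ) ∣ x - i then x + (j - i) else if (n : ℤ) ∣ x - j then x - (j - i) else x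

theorem tFun_comp (n : ℕ) (i j x : ℤ) : tFun n j i (tFun n i j x) = x := by
  unfold tFun
  by_cases h1 : (n : ℤ) ∣ x - i
  · rw [if_pos h1]
    have c1 : (n : ℤ) ∣ x + (j - i) - j := by
      have e : x + (j - i) - j = x - i := by ring
      rw [e]; exact h1
    rw [if_pos c1]; ring
  · rw [if_neg h1]
    by_cases h2 : (n : ℤ) ∣ x - j
    · rw [if_pos h2]
      have c1 : ¬ (n : ℤ) ∣ x - (j - i) - j := by
        intro hc
        apply h1
        have e : x - i = 2 * (x - j) - (x - (j - i) - j) := by ring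
        rw [e]
        exact dvd_sub (Dvd.dvd.mul_left h2 2) hc
      have c2 : (n : ℤ) ∣ x - (j - i) - i := by
        have e : x - (j - i) - i = x - j := by ring
        rw [e]; exact h2
      rw [if_neg c1, if_pos c2]; ring
    · simp only [if_neg h1, if_neg h2]

/-- The reflection `t_{i j} ∈ S̃_n`. -/
def tPerm (n : ℕ) (i j : ℤ) : Equiv.Perm ℤ :=
  ⟨tFun n i j, tFun n j i, fun x => tFun_comp n i j x, fun x => tFun_comp n j i x⟩

/-- The simple generator `s_i = t_{i, i+1} ∈ S̃_n`. -/
def sPerm (n : ℕ) (i : ℤ) : Equiv.Perm ℤ := tPerm n i (i + 1)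

/-! An involution `z` always has its 2-cycles `(a, z a)`, `a < z a`, among its inversions, so
`ℓ(z) = ℓ'(z)` says exactly that every inversion is a 2-cycle. For an involution this happens iff
`z` moves no point by more than one: then an inversion `(a, b)` forces `b = a + 1 = z a`, and
conversely a point moved further would produce an inversion that is not a 2-cycle. Such a
periodic `z` is the product of the generators `s_i` over the `i ∈ [1, n]` with `z i = i + 1`;
these `s_i` have disjoint supports, which is the non-adjacency condition mod `n`, and any product
of generators with disjoint supports moves each point by at most one. -/

open Function

def NonadjacentMod (n : ℕ) (a b : ℤ) : Prop :=
  ¬ a ≡ b [ZMOD n] ∧ ¬ a ≡ b + 1 [ZMOD n] ∧ ¬ a ≡ b - 1 [ZMOD n]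

section Periodic

variable {n : ℕ} {z : Equiv.Perm ℤ}

lemma exists_modEq_mem_Ioc (hn : 0 < n) (x : ℤ) : ∃ r ∈ Set.Ioc 0 (n : ℤ), x ≡ r [ZMOD n] := by
  obtain ⟨k, hk, -⟩ := existsUnique_add_zsmul_mem_Ioc (by exact_mod_cast hn : (0 : ℤ) < n) x 0
  refine ⟨x + k • (n : ℤ), by simpa using hk, Int.modEq_iff_add_fac.2 ⟨k, by simp [mul_comm]⟩⟩

lemma Function.Periodic.eq_of_modEq {α : Type*} {f : ℤ → α} (hf : Periodic f n) {x y : ℤ}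
    (hxy : x ≡ y [ZMOD n]) : f x = f y := by
  obtain ⟨t, rfl⟩ := Int.modEq_iff_add_fac.1 hxy
  rw [mul_comm]
  exact (hf.int_mul t x).symm

lemma periodic_apply_sub_self (hz : ∀ i : ℤ, z (i + n) = z i + n) :
    Periodic (fun x => z x - x) (n : ℤ) := fun x => by
  simp only [hz]; ring

lemma exists_forall_abs_apply_sub_le (hn : 0 < n) (hz : Periodic (fun x => z x - x) (n : ℤ)) :
    ∃ B : ℤ, ∀ x, |z x - x| ≤ B := by
  obtain ⟨B, hB⟩ := ((Set.finite_Ioc 0 (n : ℤ)).image fun x => |z x - x|).bddAbove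
  refine ⟨B, fun x => ?_⟩
  obtain ⟨r, hr, hxr⟩ := exists_modEq_mem_Ioc hn x
  rw [hz.eq_of_modEq hxr]
  exact hB ⟨r, hr, rfl⟩

end Periodic

namespace Equiv.Perm

variable {α : Type*}

lemma list_prod_apply_eq_self {l : List (Perm α)} {x : α} (h : ∀ f ∈ l, f x = x) :
    l.prod x = x := by
  induction l with
  | nil => rfl
  | cons g t ih =>
    rw [List.prod_cons, mul_apply, ih fun f hf => h f (List.mem_cons_of_mem g hf),
      h g List.mem_cons_self]

lemma list_prod_apply_of_pairwise_disjoint {l : List (Perm α)} (hl : l.Pairwise Disjoint)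
    {f : Perm α} (hf : f ∈ l) {x : α} (hx : f x ≠ x) : l.prod x = f x := by
  induction l with
  | nil => simp at hf
  | cons g t ih =>
    obtain ⟨hg, ht⟩ := List.pairwise_cons.1 hl
    rw [List.prod_cons, mul_apply]
    rcases List.mem_cons.1 hf with rfl | hf
    · rw [list_prod_apply_eq_self fun h hh => (hg h hh x).resolve_left hx]
    · rw [ih ht hf]
      exact ((hg f hf).symm (f x)).resolve_left fun h => hx (f.injective h)

end Equiv.Perm

section SimpleReflection

variable {n : ℕ}

lemma sPerm_apply (i x : ℤ) : sPerm n i x =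
    if x ≡ i [ZMOD n] then x + 1 else if x ≡ i + 1 [ZMOD n] then x - 1 else x := by
  simp only [Int.modEq_comm (a := x), Int.modEq_iff_dvd]
  show tFun n i (i + 1) x = _
  unfold tFun
  split_ifs <;> ring

lemma sPerm_apply_of_modEq {i x : ℤ} (h : x ≡ i [ZMOD n]) : sPerm n i x = x + 1 := by
  rw [sPerm_apply, if_pos h]

lemma sPerm_apply_of_modEq_add_one (hn : n ≠ 1) {i x : ℤ} (h : x ≡ i + 1 [ZMOD n]) :
    sPerm n i x = x - 1 := by
  have hi : ¬ x ≡ i [ZMOD n] := fun hi => by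
    have h1 : (n : ℤ) ∣ 1 := by simpa using (hi.symm.trans h).dvd
    exact hn (by exact_mod_cast Int.eq_one_of_dvd_one (by positivity) h1)
  rw [sPerm_apply, if_neg hi, if_pos h]

lemma sPerm_apply_ne_self_iff {i x : ℤ} :
    sPerm n i x ≠ x ↔ x ≡ i [ZMOD n] ∨ x ≡ i + 1 [ZMOD n] := by
  rw [sPerm_apply]
  split_ifs <;> simp_all

lemma abs_sPerm_apply_sub_le_one (i x : ℤ) : |sPerm n i x - x| ≤ 1 := by
  rw [sPerm_apply]
  split_ifs <;> simp

lemma disjoint_sPerm {a b : ℤ} (h : NonadjacentMod n a b) : (sPerm n a).Disjoint (sPerm n b) := by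
  obtain ⟨hab, hab₁, hab₂⟩ := h
  intro x
  by_contra! hx
  rcases sPerm_apply_ne_self_iff.1 hx.1 with ha | ha <;>
    rcases sPerm_apply_ne_self_iff.1 hx.2 with hb | hb
  · exact hab (ha.symm.trans hb)
  · exact hab₁ (ha.symm.trans hb)
  · exact hab₂ (by simpa using (ha.symm.trans hb).sub_right 1)
  · exact hab (by simpa using (ha.symm.trans hb).sub_right 1)

lemma pairwise_disjoint_map_sPerm {l : List ℤ} (hl : l.Pairwise (NonadjacentMod n)) :
    (l.map (sPerm n)).Pairwise Equiv.Perm.Disjoint :=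
  List.pairwise_map.2 (hl.imp disjoint_sPerm)

lemma abs_list_prod_sPerm_apply_sub_le_one {l : List ℤ} (hl : l.Pairwise (NonadjacentMod n))
    (x : ℤ) : |(l.map (sPerm n)).prod x - x| ≤ 1 := by
  by_cases h : ∃ f ∈ l.map (sPerm n), f x ≠ x
  · obtain ⟨f, hf, hfx⟩ := h
    obtain ⟨i, -, rfl⟩ := List.mem_map.1 hf
    rw [Equiv.Perm.list_prod_apply_of_pairwise_disjoint (pairwise_disjoint_map_sPerm hl) hf hfx]
    exact abs_sPerm_apply_sub_le_one i x
  · push Not at h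
    simp [Equiv.Perm.list_prod_apply_eq_self h]

end SimpleReflection

section Involution

def InversionsAreCycles (z : Equiv.Perm ℤ) : Prop :=
  ∀ a b, a < b → z b < z a → z a = b

variable {n : ℕ} {z : Equiv.Perm ℤ}

lemma apply_lt_apply_of_apply_eq (hinv : Involutive z) {a b : ℤ} (hab : a < b) (h : z a = b) :
    z b < z a := by
  rw [← h, hinv, h]
  exact hab

lemma inversionsAreCycles_iff (hinv : Involutive z) :
    InversionsAreCycles z ↔ ∀ x, |z x - x| ≤ 1 := by
  constructor
  · intro h
    -- if `z x > x + 1`, then `(x, x + 1)` or `(x + 1, z x)` is an inversion that is no 2-cycle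
    have hle : ∀ x, z x ≤ x + 1 := fun x => by
      by_contra! hx
      rcases lt_trichotomy (z (x + 1)) (z x) with hlt | heq | hgt
      · have := h x (x + 1) (by omega) hlt
        omega
      · have := z.injective heq
        omega
      · have := h (x + 1) (z x) (by omega) (by rw [hinv]; omega)
        omega
    intro x
    have := hle (z x)
    rw [hinv] at this
    have := hle x
    rw [abs_le]
    constructor <;> omega
  · intro h a b hab hba
    have ha := abs_le.1 (h a)
    have hb := abs_le.1 (h b)
    omega

lemma finite_inversions {B : ℤ} (hB : ∀ x, |z x - x| ≤ B) :
    {p : ℤ × ℤ | 1 ≤ p.1 ∧ p.1 ≤ (n : ℤ) ∧ p.1 < p.2 ∧ z p.2 < z p.1}.Finite := by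
  refine ((Set.finite_Icc 1 (n : ℤ)).prod (Set.finite_Icc 1 (n + 2 * B))).subset ?_
  rintro ⟨a, b⟩ ⟨ha₁, ha₂, hab, hzab : z b < z a⟩
  have ha := abs_le.1 (hB a)
  have hb := abs_le.1 (hB b)
  exact ⟨⟨ha₁, ha₂⟩, by omega, by omega⟩

lemma affLen_eq_absLen_iff (hn : 0 < n) (hz : Periodic (fun x => z x - x) (n : ℤ))
    (hinv : Involutive z) : affLen n z = absLen n z ↔ InversionsAreCycles z := by
  constructor
  · intro h
    obtain ⟨B, hB⟩ := exists_forall_abs_apply_sub_le hn hz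
    have hsub : {p : ℤ × ℤ | 1 ≤ p.1 ∧ p.1 ≤ (n : ℤ) ∧ p.1 < p.2 ∧ z p.1 = p.2} ⊆
        {p : ℤ × ℤ | 1 ≤ p.1 ∧ p.1 ≤ (n : ℤ) ∧ p.1 < p.2 ∧ z p.2 < z p.1} :=
      fun p ⟨h₁, h₂, hp, hzp⟩ => ⟨h₁, h₂, hp, apply_lt_apply_of_apply_eq hinv hp hzp⟩
    -- `Nat.card` of an infinite set is `0`, so equal cardinalities need the finiteness
    have heq := Set.eq_of_subset_of_ncard_le hsub
      (by rw [← Nat.card_coe_set_eq, ← Nat.card_coe_set_eq]; exact h.le) (finite_inversions hB)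
    intro a b hab hba
    obtain ⟨r, ⟨hr₀, hrn⟩, har⟩ := exists_modEq_mem_Ioc hn a
    obtain ⟨t, hrt⟩ := Int.modEq_iff_add_fac.1 har
    have hdr := hz.eq_of_modEq har
    have hdb := hz.eq_of_modEq (Int.modEq_iff_add_fac.2 ⟨t, rfl⟩ : b ≡ b + n * t [ZMOD n])
    have hmem : (r, b + n * t) ∈
        {p : ℤ × ℤ | 1 ≤ p.1 ∧ p.1 ≤ (n : ℤ) ∧ p.1 < p.2 ∧ z p.2 < z p.1} :=
      ⟨by omega, hrn, by omega, by simp only; omega⟩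
    have : z r = b + n * t := (heq ▸ hmem).2.2.2
    omega
  · intro h
    refine Nat.card_congr (Equiv.subtypeEquivRight fun p => ?_)
    exact and_congr_right' <| and_congr_right' <| and_congr_right fun hp =>
      ⟨h _ _ hp, apply_lt_apply_of_apply_eq hinv hp⟩

lemma apply_add_one_eq (hinv : Involutive z) {a : ℤ} (ha : z a = a + 1) : z (a + 1) = a := by
  rw [← ha, hinv]

lemma nonadjacentMod_of_apply_eq_add_one (hz : Periodic (fun x => z x - x) (n : ℤ))
    (hinv : Involutive z) {a b : ℤ} (ha : a ∈ Set.Ioc 0 (n : ℤ)) (hb : b ∈ Set.Ioc 0 (n : ℤ))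
    (hab : a ≠ b) (hza : z a = a + 1) (hzb : z b = b + 1) : NonadjacentMod n a b := by
  obtain ⟨ha₀, han⟩ := ha
  obtain ⟨hb₀, hbn⟩ := hb
  have hza' := apply_add_one_eq hinv hza
  have hzb' := apply_add_one_eq hinv hzb
  refine ⟨fun h => hab ?_, fun h => ?_, fun h => ?_⟩
  · have := Int.eq_zero_of_abs_lt_dvd h.dvd (by rw [abs_lt]; constructor <;> omega)
    omega
  · have := hz.eq_of_modEq h
    omega
  · have := hz.eq_of_modEq (by simpa using h.add_right 1)
    omega

lemma eq_list_prod_sPerm (hn : 2 ≤ n) (hz : Periodic (fun x => z x - x) (n : ℤ))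
    (hinv : Involutive z) (hd : ∀ x, |z x - x| ≤ 1) {l : List ℤ}
    (hmem : ∀ i, i ∈ l ↔ i ∈ Set.Ioc 0 (n : ℤ) ∧ z i = i + 1)
    (hl : l.Pairwise (NonadjacentMod n)) :
    z = (l.map (sPerm n)).prod := by
  have hL := pairwise_disjoint_map_sPerm hl
  have hn₀ : 0 < n := by omega
  ext x
  obtain ⟨hlo, hhi⟩ := abs_le.1 (hd x)
  obtain hup | hfix | hdown : z x = x + 1 ∨ z x = x ∨ z x = x - 1 := by omega
  · obtain ⟨r, hr, hxr⟩ := exists_modEq_mem_Ioc hn₀ x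
    have hrl : r ∈ l := (hmem r).2 ⟨hr, by have := hz.eq_of_modEq hxr; omega⟩
    have hsr := sPerm_apply_of_modEq hxr
    rw [Equiv.Perm.list_prod_apply_of_pairwise_disjoint hL (List.mem_map_of_mem hrl)
      (by omega), hsr, hup]
  · refine hfix.trans (Equiv.Perm.list_prod_apply_eq_self fun f hf => ?_).symm
    obtain ⟨i, hi, rfl⟩ := List.mem_map.1 hf
    have hzi := ((hmem i).1 hi).2
    by_contra h
    rcases sPerm_apply_ne_self_iff.1 h with hxi | hxi
    · have := hz.eq_of_modEq hxi
      omega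
    · have := hz.eq_of_modEq hxi
      have := apply_add_one_eq hinv hzi
      omega
  · obtain ⟨r, hr, hxr⟩ := exists_modEq_mem_Ioc hn₀ (x - 1)
    have hzx : z (x - 1) = x := by rw [← hdown, hinv]
    have hrl : r ∈ l := (hmem r).2 ⟨hr, by have := hz.eq_of_modEq hxr; omega⟩
    have hsr : sPerm n r x = x - 1 :=
      sPerm_apply_of_modEq_add_one (by omega) (by simpa using hxr.add_right 1)
    rw [Equiv.Perm.list_prod_apply_of_pairwise_disjoint hL (List.mem_map_of_mem hrl)
      (by omega), hsr, hdown]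

lemma exists_list_sPerm_of_abs_apply_sub_le_one (hn : 2 ≤ n)
    (hz : Periodic (fun x => z x - x) (n : ℤ)) (hinv : Involutive z) (hd : ∀ x, |z x - x| ≤ 1) :
    ∃ l : List ℤ, z = (l.map (sPerm n)).prod ∧ l.Pairwise (NonadjacentMod n) := by
  classical
  set l := ((Finset.Ioc 0 (n : ℤ)).filter fun i => z i = i + 1).toList
  have hmem : ∀ i, i ∈ l ↔ i ∈ Set.Ioc 0 (n : ℤ) ∧ z i = i + 1 := fun i => by
    simp [l]
  have hl : l.Pairwise (NonadjacentMod n) :=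
    (Finset.nodup_toList _).imp_of_mem fun ha hb hab =>
      nonadjacentMod_of_apply_eq_add_one hz hinv ((hmem _).1 ha).1 ((hmem _).1 hb).1 hab
        ((hmem _).1 ha).2 ((hmem _).1 hb).2
  exact ⟨l, eq_list_prod_sPerm hn hz hinv hd hmem hl, hl⟩

end Involution

/-- For `z ∈ Ĩ_n`, `ℓ(z) = ℓ'(z)` if and only if `z` is a product of commuting simple
generators, i.e. `z = s_{i₁} s_{i₂} ⋯ s_{i_l}` for distinct indices with
`i_j ≢ i_k ± 1 (mod n)` for all `j, k`. -/
theorem length_eq_absLength_iff (n : ℕ) (hn : 2 ≤ n) (z : Equiv.Perm ℤ)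
    (hz : IsAffine n z) (hinv : ∀ x : ℤ, z (z x) = x) :
    affLen n z = absLen n z ↔
      ∃ l : List ℤ, z = (l.map (sPerm n)).prod ∧
        l.Pairwise (fun a b => ¬ a ≡ b [ZMOD (n : ℤ)] ∧ ¬ a ≡ b + 1 [ZMOD (n : ℤ)] ∧
          ¬ a ≡ b - 1 [ZMOD (n : ℤ)]) := by
  have hper := periodic_apply_sub_self hz.1
  rw [affLen_eq_absLen_iff (by omega) hper hinv, inversionsAreCycles_iff hinv]
  constructor
  · exact exists_list_sPerm_of_abs_apply_sub_le_one hn hper hinv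
  · rintro ⟨l, rfl, hl⟩
    exact abs_list_prod_sPerm_apply_sub_le_one hl
end

section
/- Let z ∈ Ĩ_n and i < j with j ≢ i (mod n). If j ≠ z(i) < z(j) ≠ i, and either i is a right endpoint of z (z(i) < i) or j is a left endpoint of z (j < z(j)), then ℓ(t_{ij} z t_{ij}) > ℓ(t_{ij} z) = ℓ(z t_{ij}) > ℓ(z). -/
open Finset

/-!
`affLen n w` counts the inversions `(a, b)` of `w` up to the diagonal shift
`(a, b) ↦ (a + n, b + n)`. If `i < j` and `w i < w j`, the map on pairs that applies `t_{ij}` to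
both entries whenever the result is still increasing, and fixes the pair otherwise, is an
involution commuting with the shift; it sends inversions of `w` to inversions of `w t_{ij}` and
never hits `(i, j)`, so `ℓ(w) < ℓ(w t_{ij})`. This gives `ℓ(z) < ℓ(z t_{ij})`, and also
`ℓ(t_{ij} z) < ℓ(t_{ij} z t_{ij})` once the endpoint hypothesis is used to check
`t_{ij}(z i) < t_{ij}(z j)`. Finally `(a, b) ↦ (w b, w a)` identifies the inversions of `w` and
`w⁻¹`, so `ℓ(t_{ij} z) = ℓ((t_{ij} z)⁻¹) = ℓ(z t_{ij})`.
-/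


open Function Set

variable {n : ℕ}

def diagShift (n : ℕ) (k : ℤ) (p : ℤ × ℤ) : ℤ × ℤ := (p.1 + k * n, p.2 + k * n)

theorem eq_diagShift_of_diagShift_eq {p q : ℤ × ℤ} {a b : ℤ}
    (h : diagShift n a p = diagShift n b q) : q = diagShift n (a - b) p := by
  simp only [diagShift, Prod.mk.injEq] at h ⊢
  exact Prod.ext (by linarith) (by linarith)

def fundDom (n : ℕ) : Set (ℤ × ℤ) := {p | 1 ≤ p.1 ∧ p.1 ≤ n}

def fundRep (n : ℕ) (p : ℤ × ℤ) : ℤ × ℤ := diagShift n (-((p.1 - 1) / n)) p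

theorem fundRep_mem_fundDom (hn : 0 < n) (p : ℤ × ℤ) : fundRep n p ∈ fundDom n := by
  have hdiv := Int.ediv_mul_add_emod (p.1 - 1) n
  have hlo := Int.emod_nonneg (p.1 - 1) (by omega : (n : ℤ) ≠ 0)
  have hhi := Int.emod_lt_of_pos (p.1 - 1) (by omega : (0 : ℤ) < n)
  simp only [fundRep, diagShift, fundDom, mem_ofPred_eq]
  constructor <;> linarith

theorem eq_of_diagShift_eq {p q : ℤ × ℤ} {a b : ℤ} (hp : p ∈ fundDom n)
    (hq : q ∈ fundDom n) (h : diagShift n a p = diagShift n b q) : p = q := by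
  obtain ⟨hp1, hp2⟩ := hp
  obtain ⟨hq1, hq2⟩ := hq
  simp only [diagShift, Prod.mk.injEq] at h
  have hab : a = b := by
    rcases lt_trichotomy a b with hlt | heq | hgt
    · nlinarith
    · exact heq
    · nlinarith
  subst hab
  exact Prod.ext (by linarith) (by linarith)

section Counting

variable {S T : Set (ℤ × ℤ)} {F : ℤ × ℤ → ℤ × ℤ}

theorem injOn_fundRep_comp (hF : Injective F)
    (hFshift : ∀ k, Function.Commute F (diagShift n k)) :
    InjOn (fundRep n ∘ F) (fundDom n) := by
  intro p hp q hq h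
  rw [comp_apply, comp_apply, fundRep, fundRep, ← (hFshift _).eq, ← (hFshift _).eq] at h
  exact eq_of_diagShift_eq hp hq (hF h)

theorem mapsTo_fundRep (hn : 0 < n) (hT : ∀ k, MapsTo (diagShift n k) T T) :
    MapsTo (fundRep n) T (T ∩ fundDom n) :=
  fun p hp => ⟨hT _ hp, fundRep_mem_fundDom hn p⟩

theorem ncard_inter_fundDom_le (hn : 0 < n) (hT : ∀ k, MapsTo (diagShift n k) T T)
    (hTfin : (T ∩ fundDom n).Finite) (hF : Injective F)
    (hFshift : ∀ k, Function.Commute F (diagShift n k)) (hFST : MapsTo F S T) :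
    (S ∩ fundDom n).ncard ≤ (T ∩ fundDom n).ncard :=
  ncard_le_ncard_of_injOn _ (((mapsTo_fundRep hn hT).comp hFST).mono_left inter_subset_left)
    ((injOn_fundRep_comp hF hFshift).mono inter_subset_right) hTfin

theorem ncard_inter_fundDom_lt (hn : 0 < n) (hS : ∀ k, MapsTo (diagShift n k) S S)
    (hT : ∀ k, MapsTo (diagShift n k) T T) (hTfin : (T ∩ fundDom n).Finite) (hF : Injective F)
    (hFshift : ∀ k, Function.Commute F (diagShift n k)) (hFST : MapsTo F S T) {x : ℤ × ℤ}
    (hx : x ∈ T) (hxF : ∀ p ∈ S, F p ≠ x) :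
    (S ∩ fundDom n).ncard < (T ∩ fundDom n).ncard := by
  have hinj := (injOn_fundRep_comp hF hFshift).mono (inter_subset_right (s := S))
  rw [← hinj.ncard_image]
  refine ncard_lt_ncard
    ((Set.ssubset_iff_of_subset ?_).2 ⟨fundRep n x, mapsTo_fundRep hn hT hx, ?_⟩) hTfin
  · exact (((mapsTo_fundRep hn hT).comp hFST).mono_left inter_subset_left).image_subset
  · rintro ⟨p, ⟨hpS, -⟩, hpx⟩
    exact hxF _ (hS _ hpS) (((hFshift _).eq p).trans (eq_diagShift_of_diagShift_eq hpx).symm)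

end Counting

def inversions (w : ℤ → ℤ) : Set (ℤ × ℤ) := {p | p.1 < p.2 ∧ w p.2 < w p.1}

theorem affLen_eq_ncard (n : ℕ) (w : Equiv.Perm ℤ) :
    affLen n w = (inversions w ∩ fundDom n).ncard := by
  rw [affLen, ← Nat.card_coe_set_eq]
  congr! 2
  ext p
  simp only [inversions, fundDom, mem_inter_iff, mem_ofPred_eq]
  tauto

section Periodic

variable {w : ℤ → ℤ}

theorem apply_add_mul (hw : ∀ x, w (x + n) = w x + n) (x k : ℤ) :
    w (x + k * n) = w x + k * n := by
  simpa using AddConstMapClass.map_add_zsmul (AddConstMap.mk w hw) x k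

theorem apply_sub_apply_of_dvd (hw : ∀ x, w (x + n) = w x + n) {x y : ℤ}
    (h : (n : ℤ) ∣ x - y) : w x - w y = x - y := by
  obtain ⟨k, hk⟩ := h
  have := apply_add_mul hw y k
  rw [show y + k * n = x by linarith] at this
  linarith

theorem mapsTo_diagShift_inversions (hw : ∀ x, w (x + n) = w x + n) (k : ℤ) :
    MapsTo (diagShift n k) (inversions w) (inversions w) := by
  rintro ⟨a, b⟩ ⟨hab, hw'⟩
  simp only [diagShift, inversions, mem_ofPred_eq, apply_add_mul hw]
  exact ⟨by linarith, by linarith⟩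

theorem finite_inversions_inter_fundDom (hw : ∀ x, w (x + n) = w x + n) (hn : 0 < n) :
    (inversions w ∩ fundDom n).Finite := by
  have hper : Periodic (fun x => x - w x) (n : ℤ) := fun x => by simp only [hw]; ring
  obtain ⟨K, hK⟩ : BddAbove (range fun x => x - w x) := by
    rw [← hper.image_Icc (by exact_mod_cast hn) 0]
    exact ((finite_Icc _ _).image _).bddAbove
  obtain ⟨M, hM⟩ := ((finite_Icc 1 (n : ℤ)).image w).bddAbove
  refine ((finite_Icc 1 (n : ℤ)).prod (finite_Icc 1 (M + K))).subset ?_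
  rintro ⟨a, b⟩ ⟨⟨hab, hba⟩, ha1, ha2⟩
  have hwa : w a ≤ M := hM ⟨a, ⟨ha1, ha2⟩, rfl⟩
  have hb : b - w b ≤ K := hK ⟨b, rfl⟩
  exact ⟨⟨ha1, ha2⟩, by linarith, by linarith⟩

end Periodic

theorem Equiv.Perm.inv_apply_add_of_apply_add {w : Equiv.Perm ℤ}
    (hw : ∀ x, w (x + n) = w x + n) (x : ℤ) : w⁻¹ (x + n) = w⁻¹ x + n :=
  w.injective (by simp [hw])

theorem affLen_le_affLen_inv (hn : 0 < n) {w : Equiv.Perm ℤ} (hw : ∀ x, w (x + n) = w x + n) :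
    affLen n w ≤ affLen n w⁻¹ := by
  rw [affLen_eq_ncard, affLen_eq_ncard]
  have hw' := Equiv.Perm.inv_apply_add_of_apply_add hw
  refine ncard_inter_fundDom_le (F := fun p => (w p.2, w p.1)) hn
    (mapsTo_diagShift_inversions hw') (finite_inversions_inter_fundDom hw' hn) ?_ ?_ ?_
  · rintro ⟨a, b⟩ ⟨c, d⟩ h
    simp only [Prod.mk.injEq, EmbeddingLike.apply_eq_iff_eq] at h
    rw [h.1, h.2]
  · intro k p
    simp [diagShift, apply_add_mul hw]
  · rintro ⟨a, b⟩ ⟨hab, hba⟩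
    simpa [inversions] using ⟨hba, hab⟩

theorem affLen_inv (hn : 0 < n) {w : Equiv.Perm ℤ} (hw : ∀ x, w (x + n) = w x + n) :
    affLen n w⁻¹ = affLen n w := by
  refine le_antisymm ?_ (affLen_le_affLen_inv hn hw)
  simpa using affLen_le_affLen_inv hn (Equiv.Perm.inv_apply_add_of_apply_add hw)

section Reflection

variable {i j : ℤ}

@[simp]
theorem coe_tPerm (n : ℕ) (i j : ℤ) : ⇑(tPerm n i j) = tFun n i j := rfl

theorem tFun_of_dvd_left {x : ℤ} (h : (n : ℤ) ∣ x - i) : tFun n i j x = x + (j - i) :=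
  if_pos h

theorem tFun_of_dvd_right (hd : ¬ (n : ℤ) ∣ j - i) {x : ℤ} (h : (n : ℤ) ∣ x - j) :
    tFun n i j x = x - (j - i) := by
  have hi : ¬ (n : ℤ) ∣ x - i := fun hi => hd (by simpa using dvd_sub hi h)
  rw [tFun, if_neg hi, if_pos h]

theorem tFun_of_not_dvd {x : ℤ} (hi : ¬ (n : ℤ) ∣ x - i) (hj : ¬ (n : ℤ) ∣ x - j) :
    tFun n i j x = x := by
  rw [tFun, if_neg hi, if_neg hj]

theorem tFun_cases (hd : ¬ (n : ℤ) ∣ j - i) (x : ℤ) :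
    ((n : ℤ) ∣ x - i ∧ tFun n i j x = x + (j - i)) ∨
    ((n : ℤ) ∣ x - j ∧ tFun n i j x = x - (j - i)) ∨
    (¬ (n : ℤ) ∣ x - i ∧ ¬ (n : ℤ) ∣ x - j ∧ tFun n i j x = x) := by
  by_cases hi : (n : ℤ) ∣ x - i
  · exact Or.inl ⟨hi, tFun_of_dvd_left hi⟩
  by_cases hj : (n : ℤ) ∣ x - j
  · exact Or.inr (Or.inl ⟨hj, tFun_of_dvd_right hd hj⟩)
  · exact Or.inr (Or.inr ⟨hi, hj, tFun_of_not_dvd hi hj⟩)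

theorem tFun_swap (hd : ¬ (n : ℤ) ∣ j - i) : tFun n j i = tFun n i j := by
  have hd' : ¬ (n : ℤ) ∣ i - j := by rwa [← dvd_neg, neg_sub]
  ext x
  rcases tFun_cases hd x with ⟨h, e⟩ | ⟨h, e⟩ | ⟨hi, hj, e⟩
  · rw [e, tFun_of_dvd_right hd' h]; ring
  · rw [e, tFun_of_dvd_left h]; ring
  · rw [e, tFun_of_not_dvd hj hi]

theorem tFun_tFun (hd : ¬ (n : ℤ) ∣ j - i) (x : ℤ) : tFun n i j (tFun n i j x) = x := by
  simpa only [tFun_swap hd] using tFun_comp n i j x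

theorem tPerm_inv (hd : ¬ (n : ℤ) ∣ j - i) : (tPerm n i j)⁻¹ = tPerm n i j :=
  Equiv.ext fun x => congrFun (tFun_swap hd) x

theorem tFun_add (x : ℤ) : tFun n i j (x + n) = tFun n i j x + n := by
  have hshift : ∀ y : ℤ, ((n : ℤ) ∣ x + n - y ↔ (n : ℤ) ∣ x - y) := fun y => by
    rw [show x + n - y = x - y + n by ring, dvd_add_self_right]
  simp only [tFun, hshift]
  split_ifs <;> ring

end Reflection

section ReflectionLength

variable {w : ℤ → ℤ} {i j : ℤ}

theorem exists_tFun_eq_and_apply_tFun_eq (hw : ∀ x, w (x + n) = w x + n)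
    (hd : ¬ (n : ℤ) ∣ j - i) (x : ℤ) :
    ∃ δ : ℤ, tFun n i j x = x + δ * (j - i) ∧
      w (tFun n i j x) = w x + δ * (w j - w i) := by
  rcases tFun_cases hd x with ⟨h, e⟩ | ⟨h, e⟩ | ⟨-, -, e⟩
  · have h₁ := apply_sub_apply_of_dvd hw h
    have h₂ := apply_sub_apply_of_dvd hw (y := j)
      (show (n : ℤ) ∣ x + (j - i) - j by rwa [show x + (j - i) - j = x - i by ring])
    exact ⟨1, by rw [e]; ring, by rw [e]; linarith⟩
  · have h₁ := apply_sub_apply_of_dvd hw h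
    have h₂ := apply_sub_apply_of_dvd hw (y := i)
      (show (n : ℤ) ∣ x - (j - i) - i by rwa [show x - (j - i) - i = x - j by ring])
    exact ⟨-1, by rw [e]; ring, by rw [e]; linarith⟩
  · exact ⟨0, by rw [e]; ring, by rw [e]; ring⟩

theorem apply_tFun_lt_apply_tFun (hw : ∀ x, w (x + n) = w x + n) (hd : ¬ (n : ℤ) ∣ j - i)
    (hij : i < j) (hlt : w i < w j) {a b : ℤ} (hab : a < b) (hba : w b < w a)
    (ht : tFun n i j b < tFun n i j a) : w (tFun n i j b) < w (tFun n i j a) := by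
  obtain ⟨δa, hta, hwa⟩ := exists_tFun_eq_and_apply_tFun_eq hw hd a
  obtain ⟨δb, htb, hwb⟩ := exists_tFun_eq_and_apply_tFun_eq hw hd b
  -- `b - a > 0` and `j - i > 0`, so `tFun b < tFun a` forces `δb < δa`
  have hδ : δb < δa := by
    by_contra! h
    nlinarith
  nlinarith

def reflectPair (n : ℕ) (i j : ℤ) (p : ℤ × ℤ) : ℤ × ℤ :=
  if p.1 < p.2 ∧ tFun n i j p.1 < tFun n i j p.2 then (tFun n i j p.1, tFun n i j p.2) else p

theorem reflectPair_involutive (hd : ¬ (n : ℤ) ∣ j - i) : Involutive (reflectPair n i j) := by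
  intro p
  by_cases h : p.1 < p.2 ∧ tFun n i j p.1 < tFun n i j p.2
  · have e : reflectPair n i j p = (tFun n i j p.1, tFun n i j p.2) := if_pos h
    rw [e]
    simp [reflectPair, h, tFun_tFun hd]
  · simp only [reflectPair, if_neg h]

theorem commute_reflectPair_diagShift (k : ℤ) :
    Function.Commute (reflectPair n i j) (diagShift n k) := by
  intro p
  have ht := apply_add_mul (tFun_add (n := n) (i := i) (j := j))
  simp only [reflectPair, diagShift, ht, add_lt_add_iff_right]
  split_ifs <;> rfl

theorem mapsTo_reflectPair_inversions (hw : ∀ x, w (x + n) = w x + n)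
    (hd : ¬ (n : ℤ) ∣ j - i) (hij : i < j) (hlt : w i < w j) :
    MapsTo (reflectPair n i j) (inversions w) (inversions (w ∘ tFun n i j)) := by
  rintro ⟨a, b⟩ ⟨hab, hba⟩
  by_cases h : a < b ∧ tFun n i j a < tFun n i j b
  · simpa [reflectPair, if_pos h, inversions, tFun_tFun hd] using ⟨h.2, hba⟩
  · have hne : tFun n i j a ≠ tFun n i j b := fun he => hab.ne (by
      simpa only [tFun_tFun hd] using congrArg (tFun n i j) he)
    have ht : tFun n i j b < tFun n i j a :=
      lt_of_le_of_ne (not_lt.mp (not_and.mp h hab)) hne.symm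
    simp only [reflectPair, if_neg h, inversions, comp_apply, mem_ofPred_eq]
    exact ⟨hab, apply_tFun_lt_apply_tFun hw hd hij hlt hab hba ht⟩

theorem reflectPair_ne_of_mem_inversions (hd : ¬ (n : ℤ) ∣ j - i) (hlt : w i < w j)
    {p : ℤ × ℤ} (hp : p ∈ inversions w) : reflectPair n i j p ≠ (i, j) := by
  intro h
  have hp' : p = reflectPair n i j (i, j) := by rw [← h, reflectPair_involutive hd]
  have hij' : ¬ (i < j ∧ tFun n i j i < tFun n i j j) := by
    rw [tFun_of_dvd_left (by simp), tFun_of_dvd_right hd (by simp)]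
    omega
  rw [reflectPair, if_neg hij'] at hp'
  subst hp'
  exact lt_asymm hlt hp.2

theorem mem_inversions_comp_tFun (hd : ¬ (n : ℤ) ∣ j - i) (hij : i < j) (hlt : w i < w j) :
    (i, j) ∈ inversions (w ∘ tFun n i j) := by
  simpa [inversions, tFun_of_dvd_left, tFun_of_dvd_right hd] using ⟨hij, hlt⟩

theorem affLen_lt_affLen_mul_tPerm (hn : 0 < n) {w : Equiv.Perm ℤ}
    (hw : ∀ x, w (x + n) = w x + n) (hd : ¬ (n : ℤ) ∣ j - i) (hij : i < j)
    (hlt : w i < w j) : affLen n w < affLen n (w * tPerm n i j) := by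
  have hwt : ∀ x, (w * tPerm n i j) (x + n) = (w * tPerm n i j) x + n := fun x => by
    simp [tFun_add, hw]
  rw [affLen_eq_ncard, affLen_eq_ncard]
  refine ncard_inter_fundDom_lt hn (mapsTo_diagShift_inversions hw)
    (mapsTo_diagShift_inversions hwt) (finite_inversions_inter_fundDom hwt hn)
    (reflectPair_involutive hd).injective commute_reflectPair_diagShift
    (mapsTo_reflectPair_inversions hw hd hij hlt) (mem_inversions_comp_tFun hd hij hlt)
    fun p hp => reflectPair_ne_of_mem_inversions hd hlt hp

end ReflectionLength

section Involution

variable {z : ℤ → ℤ}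

theorem apply_sub_eq_sub_apply (hz : ∀ x, z (x + n) = z x + n) (hinv : ∀ x, z (z x) = x)
    {x y : ℤ} (h : (n : ℤ) ∣ z x - y) : z y - x = y - z x := by
  simpa only [hinv] using
    apply_sub_apply_of_dvd hz (x := y) (y := z x) (by rwa [← dvd_neg, neg_sub])

theorem apply_eq_self_of_dvd (hz : ∀ x, z (x + n) = z x + n) (hinv : ∀ x, z (z x) = x)
    {x : ℤ} (h : (n : ℤ) ∣ z x - x) : z x = x := by
  linarith [apply_sub_eq_sub_apply hz hinv h]

theorem tFun_apply_lt_tFun_apply (hz : ∀ x, z (x + n) = z x + n) (hinv : ∀ x, z (z x) = x)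
    {i j : ℤ} (hd : ¬ (n : ℤ) ∣ j - i) (hij : i < j) (hlt : z i < z j)
    (hend : z i < i ∨ j < z j) : tFun n i j (z i) < tFun n i j (z j) := by
  rcases tFun_cases hd (z i) with ⟨hi, ei⟩ | ⟨hj, ei⟩ | ⟨hi, hj, ei⟩
  · have hzi := apply_eq_self_of_dvd hz hinv hi
    rcases tFun_cases hd (z j) with ⟨hi', -⟩ | ⟨hj', -⟩ | ⟨-, -, ej⟩
    · have hzj : z j = j := by linarith [apply_sub_eq_sub_apply hz hinv hi']
      exact absurd (hzj ▸ hi') hd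
    · have := apply_eq_self_of_dvd hz hinv hj'
      omega
    · rw [ei, ej]
      omega
  · have := apply_sub_eq_sub_apply hz hinv hj
    rw [ei, tFun_of_dvd_left (by rwa [this, ← dvd_neg, neg_sub])]
    linarith
  · rcases tFun_cases hd (z j) with ⟨hi', -⟩ | ⟨hj', ej⟩ | ⟨-, -, ej⟩
    · have := apply_sub_eq_sub_apply hz hinv hi'
      exact absurd (by rwa [this, ← dvd_neg, neg_sub]) hj
    · have := apply_eq_self_of_dvd hz hinv hj'
      rw [ei, ej]
      omega
    · rwa [ei, ej]

end Involution

theorem leftright_bruhat_general (n : ℕ) (hn : 2 ≤ n) (z : Equiv.Perm ℤ)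
    (hz : IsAffine n z) (hinv : ∀ x : ℤ, z (z x) = x) (i j : ℤ)
    (hij : i < j) (hmod : ¬ i ≡ j [ZMOD (n : ℤ)])
    (h2 : z i < z j)
    (hend : z i < i ∨ j < z j) :
    affLen n (tPerm n i j * z) < affLen n (tPerm n i j * z * tPerm n i j) ∧
      affLen n (tPerm n i j * z) = affLen n (z * tPerm n i j) ∧
      affLen n z < affLen n (z * tPerm n i j) := by
  have hn0 : 0 < n := by omega
  have hd : ¬ (n : ℤ) ∣ j - i := fun h => hmod (Int.modEq_iff_dvd.mpr h)
  have htz : ∀ x, (tPerm n i j * z) (x + n) = (tPerm n i j * z) x + n := fun x => by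
    simp [hz.1, tFun_add]
  have hz_inv : z⁻¹ = z := inv_eq_of_mul_eq_one_right (Equiv.ext hinv)
  refine ⟨?_, ?_, affLen_lt_affLen_mul_tPerm hn0 hz.1 hd hij h2⟩
  · exact affLen_lt_affLen_mul_tPerm hn0 htz hd hij
      (tFun_apply_lt_tFun_apply hz.1 hinv hd hij h2 hend)
  · rw [← affLen_inv hn0 htz, mul_inv_rev, hz_inv, tPerm_inv hd]

/-- Let `z ∈ Ĩ_n` and `i < j` with `j ≢ i (mod n)`. If `j ≠ z i < z j ≠ i` and either `i`
is a right endpoint of `z` (`z i < i`) or `j` is a left endpoint of `z` (`j < z j`), then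
`ℓ(t_{ij} z t_{ij}) > ℓ(t_{ij} z) = ℓ(z t_{ij}) > ℓ(z)`. -/
theorem leftright_bruhat (n : ℕ) (hn : 2 ≤ n) (z : Equiv.Perm ℤ)
    (hz : IsAffine n z) (hinv : ∀ x : ℤ, z (z x) = x) (i j : ℤ)
    (hij : i < j) (hmod : ¬ i ≡ j [ZMOD (n : ℤ)])
    (h1 : z i ≠ j) (h2 : z i < z j) (h3 : z j ≠ i)
    (hend : z i < i ∨ j < z j) :
    affLen n (tPerm n i j * z) < affLen n (tPerm n i j * z * tPerm n i j) ∧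
      affLen n (tPerm n i j * z) = affLen n (z * tPerm n i j) ∧
      affLen n z < affLen n (z * tPerm n i j) :=
  leftright_bruhat_general n hn z hz hinv i j hij hmod h2 hend
end
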